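/- Let A be a unique factorization domain, let ξ ∈ K̄ be such that 1, ξ and ξ² are linearly independent over K, let 0 < c₁ < 6^{−1/2} and X₀ ≥ 1, and suppose that for every real X ≥ X₀ there is a primitive triple x ∈ A³ with |x₀| ≤ X and L(x) ≤ c₁·X^{−1/γ}. Then there exists a sequence (x_i)_{i≥1} of primitive triples in A³ such that, setting X_i = |x_{i,0}| and L_i = L(x_i), one has for every i ≥ 1: L_i ≤ 2c₁·X_{i+1}^{−1/γ}, L_{i+1} ≤ L_i/2, X_i ≤ X_{i+1}, the points x_i and x_{i+1} are linearly independent over K, and moreover X_i → ∞ as i → ∞. -/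

import Mathlib

/-!
Write `H(x) = |x₀|` and `L(x)` for the height and the approximation error of a triple. If two
primitive triples `x, y` satisfy `H(y) L(x) + H(x) L(y) < 1`, then every minor `x₀ y_j - y₀ x_j`
is an element of `A` of absolute value `< 1`, hence zero; so `x` and `y` are proportional, differ
by a unit of the UFD `A`, and have the same `L`. Consequently `L` is bounded below by a positive
constant on triples of bounded height, and any descent that halves `L` while staying below a
given height terminates.

Given `x_i`, apply the hypothesis at the height `X` with `c₁ X^(-1/γ) = L_i / 2` and descend:
this yields `x_{i+1}` of height `≤ X` with `L_{i+1} ≤ L_i / 2` such that no triple of height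
`≤ X` has error `≤ L_{i+1} / 2`. Then `L_i = 2 c₁ X^(-1/γ) ≤ 2 c₁ X_{i+1}^(-1/γ)`, the minimality
of `x_i` gives `X_i ≤ X_{i+1}`, distinct errors force linear independence, and `L_i → 0` forces
`X_i → ∞`.
-/

open Filter

section Descent

variable {ι : Type*} {S : Set ι} {H L : ι → ℝ}

theorem exists_minimal_up_to_halving {B ε : ℝ} (hε : 0 < ε)
    (hεL : ∀ z ∈ S, H z ≤ B → ε ≤ L z) {w : ι} (hw : w ∈ S) (hwB : H w ≤ B) :
    ∃ y ∈ S, H y ≤ B ∧ L y ≤ L w ∧ ∀ z ∈ S, L z ≤ L y / 2 → B < H z := by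
  suffices descent : ∀ n : ℕ, ∀ y ∈ S, H y ≤ B → L y ≤ ε * 2 ^ n →
      ∃ y' ∈ S, H y' ≤ B ∧ L y' ≤ L y ∧ ∀ z ∈ S, L z ≤ L y' / 2 → B < H z by
    obtain ⟨n, hn⟩ := pow_unbounded_of_one_lt (L w / ε) one_lt_two
    exact descent n w hw hwB (by rw [div_lt_iff₀ hε] at hn; linarith)
  intro n
  induction n with
  | zero =>
    intro y hy hyB hyε
    refine ⟨y, hy, hyB, le_rfl, fun z hz hzy => ?_⟩
    by_contra! hzB
    linarith [hεL z hz hzB, pow_zero (2 : ℝ)]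
  | succ n ih =>
    intro y hy hyB hyε
    by_cases hsmaller : ∃ z ∈ S, L z ≤ L y / 2 ∧ H z ≤ B
    · obtain ⟨z, hz, hzy, hzB⟩ := hsmaller
      obtain ⟨y', hy', hy'B, hy'z, hy'min⟩ := ih z hz hzB (by rw [pow_succ] at hyε; linarith)
      exact ⟨y', hy', hy'B, by linarith [hεL y hy hyB], hy'min⟩
    · push Not at hsmaller
      exact ⟨y, hy, hyB, le_rfl, hsmaller⟩

theorem pos_of_forall_exists_pos_le (hbound : ∀ B, ∃ ε > 0, ∀ z ∈ S, H z ≤ B → ε ≤ L z)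
    {x : ι} (hx : x ∈ S) : 0 < L x := by
  obtain ⟨ε, hε, hεL⟩ := hbound (H x)
  exact hε.trans_le (hεL x hx le_rfl)

theorem tendsto_atTop_of_halving (hbound : ∀ B, ∃ ε > 0, ∀ z ∈ S, H z ≤ B → ε ≤ L z)
    {x : ℕ → ι} (hx : ∀ i, x i ∈ S) (hhalf : ∀ i, L (x (i + 1)) ≤ L (x i) / 2) :
    Tendsto (fun i => H (x i)) atTop atTop := by
  have hL_nonneg : ∀ i, 0 ≤ L (x i) := fun i => (pos_of_forall_exists_pos_le hbound (hx i)).le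
  have hgeom : ∀ i, L (x i) ≤ (1 / 2) ^ i * L (x 0) := fun i =>
    le_geom (u := fun i => L (x i)) (by norm_num) i fun k _ => by linarith [hhalf k]
  have hL_tendsto : Tendsto (fun i => L (x i)) atTop (nhds 0) :=
    squeeze_zero hL_nonneg hgeom (by
      simpa using (tendsto_pow_atTop_nhds_zero_of_lt_one (by norm_num : (0 : ℝ) ≤ 1 / 2)
        (by norm_num)).mul_const (L (x 0)))
  refine tendsto_atTop.2 fun B => ?_
  obtain ⟨ε, hε, hεL⟩ := hbound B
  filter_upwards [hL_tendsto.eventually (gt_mem_nhds hε)] with i hi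
  by_contra! hiB
  exact (hεL _ (hx i) hiB.le).not_gt hi

variable (S H L) in
def HalvingMinimal (x : ι) : Prop := ∀ z ∈ S, L z ≤ L x / 2 → H x ≤ H z

theorem exists_halving_successor {e c X₀ : ℝ} (he : e < 0) (hc : 0 < c) (hX₀ : 0 < X₀)
    (hH : ∀ x ∈ S, 0 < H x) (hbound : ∀ B, ∃ ε > 0, ∀ z ∈ S, H z ≤ B → ε ≤ L z)
    (hsol : ∀ X, X₀ ≤ X → ∃ x ∈ S, H x ≤ X ∧ L x ≤ c * X ^ e)
    {x : ι} (hx : x ∈ S) (hxL : L x ≤ c * X₀ ^ e) :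
    ∃ y ∈ S, HalvingMinimal S H L y ∧ L y ≤ L x / 2 ∧ L x ≤ 2 * c * H y ^ e := by
  have hLx : 0 < L x := pos_of_forall_exists_pos_le hbound hx
  set B := (L x / (2 * c)) ^ e⁻¹
  have hBe : B ^ e = L x / (2 * c) := Real.rpow_inv_rpow (by positivity) he.ne
  have hX₀B : X₀ ≤ B := by
    have hX₀e : 0 < X₀ ^ e := Real.rpow_pos_of_pos hX₀ e
    calc X₀ = (X₀ ^ e) ^ e⁻¹ := (Real.rpow_rpow_inv hX₀.le he.ne).symm
      _ ≤ B := Real.rpow_le_rpow_of_nonpos (by positivity)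
          (by rw [div_le_iff₀ (by positivity)]; nlinarith) (inv_nonpos.2 he.le)
  obtain ⟨w, hw, hwB, hwL⟩ := hsol B hX₀B
  obtain ⟨ε, hε, hεL⟩ := hbound B
  obtain ⟨y, hy, hyB, hyw, hymin⟩ := exists_minimal_up_to_halving hε hεL hw hwB
  refine ⟨y, hy, fun z hz hzy => hyB.trans (hymin z hz hzy).le, ?_, ?_⟩
  · calc L y ≤ c * B ^ e := hyw.trans hwL
      _ = L x / 2 := by rw [hBe]; field_simp
  · calc L x = 2 * c * B ^ e := by rw [hBe]; field_simp
      _ ≤ 2 * c * H y ^ e :=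
        mul_le_mul_of_nonneg_left (Real.rpow_le_rpow_of_nonpos (hH y hy) hyB he.le)
          (by positivity)

theorem exists_seq_halving {e c X₀ : ℝ} (he : e < 0) (hc : 0 < c) (hX₀ : 0 < X₀)
    (hH : ∀ x ∈ S, 0 < H x) (hbound : ∀ B, ∃ ε > 0, ∀ z ∈ S, H z ≤ B → ε ≤ L z)
    (hsol : ∀ X, X₀ ≤ X → ∃ x ∈ S, H x ≤ X ∧ L x ≤ c * X ^ e) :
    ∃ x : ℕ → ι, (∀ i, x i ∈ S) ∧
      (∀ i, L (x i) ≤ 2 * c * H (x (i + 1)) ^ e ∧ L (x (i + 1)) ≤ L (x i) / 2 ∧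
        H (x i) ≤ H (x (i + 1))) ∧
      Tendsto (fun i => H (x i)) atTop atTop := by
  let P : ι → Prop := fun x => x ∈ S ∧ HalvingMinimal S H L x ∧ L x ≤ c * X₀ ^ e
  have hstart : ∃ x, P x := by
    obtain ⟨w, hw, hwX₀, hwL⟩ := hsol X₀ le_rfl
    obtain ⟨ε, hε, hεL⟩ := hbound X₀
    obtain ⟨y, hy, hyB, hyw, hymin⟩ := exists_minimal_up_to_halving hε hεL hw hwX₀
    exact ⟨y, hy, fun z hz hzy => hyB.trans (hymin z hz hzy).le, hyw.trans hwL⟩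
  have hstep : ∀ x, P x → ∃ y, P y ∧ L x ≤ 2 * c * H y ^ e ∧ L y ≤ L x / 2 ∧ H x ≤ H y := by
    rintro x ⟨hx, hxmin, hxL⟩
    obtain ⟨y, hy, hymin, hyx, hxy⟩ := exists_halving_successor he hc hX₀ hH hbound hsol hx hxL
    exact ⟨y, ⟨hy, hymin, by linarith [pos_of_forall_exists_pos_le hbound hx]⟩, hxy, hyx, hxmin y hy hyx⟩
  obtain ⟨x₀, hx₀⟩ := hstart
  choose! next hnextP hnext using hstep
  have hP : ∀ i, P (next^[i] x₀) := fun i => by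
    induction i with
    | zero => exact hx₀
    | succ i ih => rw [Function.iterate_succ_apply']; exact hnextP _ ih
  have hsucc : ∀ i, next^[i + 1] x₀ = next (next^[i] x₀) := fun i =>
    Function.iterate_succ_apply' next i x₀
  refine ⟨fun i => next^[i] x₀, fun i => (hP i).1, fun i => ?_, ?_⟩
  · simp only [hsucc]; exact hnext _ (hP i)
  · exact tendsto_atTop_of_halving hbound (fun i => (hP i).1)
      fun i => by simp only [hsucc]; exact (hnext _ (hP i)).2.1

end Descent

namespace MinimalPoints

def IsPrimitiveTriple {A : Type*} [CommRing A] (x : Fin 3 → A) : Prop :=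
  ∀ d : A, d ∣ x 0 → d ∣ x 1 → d ∣ x 2 → IsUnit d

def admissibleTriples (A : Type*) [CommRing A] : Set (Fin 3 → A) :=
  {x | IsPrimitiveTriple x ∧ x 0 ≠ 0}

variable {A : Type*} [CommRing A] {L : Type*} [Field L]
  (φ : A →+* L) (abv : AbsoluteValue L ℝ) (ξ : L)

def height (x : Fin 3 → A) : ℝ := abv (φ (x 0))

def approxError (x : Fin 3 → A) : ℝ :=
  max (abv (φ (x 0) * ξ - φ (x 1))) (abv (φ (x 0) * ξ ^ 2 - φ (x 2)))

variable {φ abv ξ}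

theorem eq_zero_of_abv_lt_one (hφ : ∀ a : A, a ≠ 0 → 1 ≤ abv (φ a)) {a : A}
    (ha : abv (φ a) < 1) : a = 0 := by
  by_contra h
  exact (hφ a h).not_gt ha

theorem abv_eq_one_of_isUnit [Nontrivial A] (hφ : ∀ a : A, a ≠ 0 → 1 ≤ abv (φ a)) {u : A}
    (hu : IsUnit u) : abv (φ u) = 1 := by
  obtain ⟨v, hv⟩ := hu.exists_right_inv
  have hprod : abv (φ u) * abv (φ v) = 1 := by rw [← map_mul, ← map_mul, hv, map_one, map_one]
  nlinarith [hφ u (left_ne_zero_of_mul_eq_one hv), hφ v (right_ne_zero_of_mul_eq_one hv)]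

theorem abv_sub_le_approxError (x : Fin 3 → A) (j : Fin 3) :
    abv (φ (x 0) * ξ ^ (j : ℕ) - φ (x j)) ≤ approxError φ abv ξ x := by
  fin_cases j
  · simp only [Fin.zero_eta, pow_zero, mul_one, sub_self, map_zero]
    exact (abv.nonneg _).trans (le_max_left _ _)
  · simp only [Fin.mk_one, pow_one]
    exact le_max_left _ _
  · exact le_max_right _ _

theorem approxError_pos (hξ : ∀ a b : A, a ≠ 0 → φ a * ξ ≠ φ b) {x : Fin 3 → A}
    (hx0 : x 0 ≠ 0) : 0 < approxError φ abv ξ x := by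
  have := abv.pos (sub_ne_zero.2 (hξ (x 0) (x 1) hx0))
  exact this.trans_le (le_max_left _ _)

theorem IsPrimitiveTriple.head_ne_zero [Nontrivial A] (hφ : ∀ a : A, a ≠ 0 → 1 ≤ abv (φ a))
    {x : Fin 3 → A} (hx : IsPrimitiveTriple x) (hxL : approxError φ abv ξ x < 1) : x 0 ≠ 0 := by
  intro h0
  simp only [approxError, h0, map_zero, zero_mul, zero_sub, abv.map_neg, max_lt_iff] at hxL
  have h1 := eq_zero_of_abv_lt_one hφ hxL.1
  have h2 := eq_zero_of_abv_lt_one hφ hxL.2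
  exact not_isUnit_zero (hx 0 (by rw [h0]) (by rw [h1]) (by rw [h2]))

theorem cross_eq_of_height_mul_approxError_lt (hφ : ∀ a : A, a ≠ 0 → 1 ≤ abv (φ a))
    {x y : Fin 3 → A}
    (hxy : height φ abv y * approxError φ abv ξ x + height φ abv x * approxError φ abv ξ y < 1)
    (j : Fin 3) : x 0 * y j = y 0 * x j := by
  rw [← sub_eq_zero]
  apply eq_zero_of_abv_lt_one hφ
  have hdet : φ (x 0 * y j - y 0 * x j) = φ (y 0) * (φ (x 0) * ξ ^ (j : ℕ) - φ (x j))
      - φ (x 0) * (φ (y 0) * ξ ^ (j : ℕ) - φ (y j)) := by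
    simp only [map_sub, map_mul]; ring
  calc abv (φ (x 0 * y j - y 0 * x j))
      ≤ abv (φ (y 0)) * abv (φ (x 0) * ξ ^ (j : ℕ) - φ (x j))
        + abv (φ (x 0)) * abv (φ (y 0) * ξ ^ (j : ℕ) - φ (y j)) := by
        rw [hdet, ← abv.map_mul, ← abv.map_mul]; exact abv.sub_le_add _ _
    _ ≤ height φ abv y * approxError φ abv ξ x + height φ abv x * approxError φ abv ξ y :=
        add_le_add (mul_le_mul_of_nonneg_left (abv_sub_le_approxError x j) (abv.nonneg _))
          (mul_le_mul_of_nonneg_left (abv_sub_le_approxError y j) (abv.nonneg _))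
    _ < 1 := hxy

theorem IsPrimitiveTriple.exists_unit_mul_eq [UniqueFactorizationMonoid A] {x y : Fin 3 → A}
    (hx : IsPrimitiveTriple x) (hy : IsPrimitiveTriple y) (hx0 : x 0 ≠ 0)
    (hxy : ∀ j, x 0 * y j = y 0 * x j) : ∃ u : Aˣ, ∀ j, y j = u * x j := by
  obtain ⟨a, b, c, hab, hca, hcb⟩ :=
    UniqueFactorizationMonoid.exists_reduced_factors' (y 0) (x 0) hx0
  have hc : c ≠ 0 := by rintro rfl; exact hx0 (by rw [← hcb, zero_mul])
  have hba : ∀ j, b * y j = a * x j := fun j =>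
    mul_left_cancel₀ hc (by rw [← mul_assoc, ← mul_assoc, hcb, hca, hxy j])
  have hb : IsUnit b := hx b
    (hab.symm.dvd_of_dvd_mul_left ⟨y 0, (hba 0).symm⟩)
    (hab.symm.dvd_of_dvd_mul_left ⟨y 1, (hba 1).symm⟩)
    (hab.symm.dvd_of_dvd_mul_left ⟨y 2, (hba 2).symm⟩)
  have ha : IsUnit a := hy a
    (hab.dvd_of_dvd_mul_left ⟨x 0, hba 0⟩)
    (hab.dvd_of_dvd_mul_left ⟨x 1, hba 1⟩)
    (hab.dvd_of_dvd_mul_left ⟨x 2, hba 2⟩)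
  obtain ⟨a, rfl⟩ := ha
  obtain ⟨b, rfl⟩ := hb
  exact ⟨b⁻¹ * a, fun j => by rw [Units.val_mul, mul_assoc, ← hba j, Units.inv_mul_cancel_left]⟩

theorem approxError_eq_of_cross_eq [Nontrivial A] [UniqueFactorizationMonoid A]
    (hφ : ∀ a : A, a ≠ 0 → 1 ≤ abv (φ a)) {x y : Fin 3 → A}
    (hx : IsPrimitiveTriple x) (hy : IsPrimitiveTriple y) (hx0 : x 0 ≠ 0)
    (hxy : ∀ j, x 0 * y j = y 0 * x j) : approxError φ abv ξ y = approxError φ abv ξ x := by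
  obtain ⟨u, hu⟩ := hx.exists_unit_mul_eq hy hx0 hxy
  have habvu : abv (φ u) = 1 := abv_eq_one_of_isUnit hφ u.isUnit
  simp only [approxError, hu, map_mul, mul_assoc, ← mul_sub, abv.map_mul, habvu, one_mul]

theorem exists_pos_le_approxError [Nontrivial A] [UniqueFactorizationMonoid A]
    (hφ : ∀ a : A, a ≠ 0 → 1 ≤ abv (φ a)) (hξ : ∀ a b : A, a ≠ 0 → φ a * ξ ≠ φ b) (B : ℝ) :
    ∃ ε > 0, ∀ z ∈ admissibleTriples A, height φ abv z ≤ B → ε ≤ approxError φ abv ξ z := by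
  set M := max B 1
  have hM : 0 < M := lt_max_of_lt_right one_pos
  have hδ : 0 < 1 / (2 * M) := by positivity
  by_cases hw : ∃ w ∈ admissibleTriples A,
      height φ abv w ≤ B ∧ approxError φ abv ξ w < 1 / (2 * M)
  swap
  · push Not at hw
    exact ⟨_, hδ, hw⟩
  -- Admissible triples of height `≤ B` and error `< 1/(2M)` are all proportional to `w`.
  obtain ⟨w, hw, hwB, hwδ⟩ := hw
  refine ⟨min (1 / (2 * M)) (approxError φ abv ξ w), lt_min hδ (approxError_pos hξ hw.2),
    fun z hz hzB => ?_⟩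
  by_cases hzδ : approxError φ abv ξ z < 1 / (2 * M)
  · have hsmall : height φ abv z * approxError φ abv ξ w
        + height φ abv w * approxError φ abv ξ z < 1 := by
      have hzM : height φ abv z ≤ M := hzB.trans (le_max_left _ _)
      have hwM : height φ abv w ≤ M := hwB.trans (le_max_left _ _)
      have hMδ : M * (1 / (2 * M)) = 1 / 2 := by field_simp
      nlinarith [abv.nonneg (φ (z 0)), abv.nonneg (φ (w 0)),
        (approxError_pos (abv := abv) hξ hw.2).le, (approxError_pos (abv := abv) hξ hz.2).le]
    rw [approxError_eq_of_cross_eq hφ hw.1 hz.1 hw.2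
      (cross_eq_of_height_mul_approxError_lt hφ hsmall)]
    exact min_le_right _ _
  · exact (min_le_left _ _).trans (not_lt.1 hzδ)

theorem eq_zero_of_smul_add_smul_eq_zero [Nontrivial A] [UniqueFactorizationMonoid A]
    {K : Type*} [Field K] [Algebra A K] [FaithfulSMul A K]
    (hφ : ∀ a : A, a ≠ 0 → 1 ≤ abv (φ a)) {x y : Fin 3 → A}
    (hx : x ∈ admissibleTriples A) (hy : IsPrimitiveTriple y)
    (hxy : approxError φ abv ξ y ≠ approxError φ abv ξ x) {c d : K}
    (hcd : (c • fun j => algebraMap A K (x j)) + (d • fun j => algebraMap A K (y j)) = 0) :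
    c = 0 ∧ d = 0 := by
  by_contra hcd0
  refine hxy (approxError_eq_of_cross_eq hφ hx.1 hy hx.2 fun j => ?_)
  have h0 := congrFun hcd 0
  have hj := congrFun hcd j
  simp only [Pi.add_apply, Pi.smul_apply, smul_eq_mul, Pi.zero_apply] at h0 hj
  apply FaithfulSMul.algebraMap_injective A K
  rw [map_mul, map_mul]
  rcases not_and_or.1 hcd0 with hc | hd
  · exact mul_left_cancel₀ hc
      (by linear_combination algebraMap A K (y j) * h0 - algebraMap A K (y 0) * hj)
  · exact mul_left_cancel₀ hd
      (by linear_combination algebraMap A K (x 0) * hj - algebraMap A K (x j) * h0)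

theorem mul_ne_of_linearIndependent {K : Type*} [Field K] [Algebra A K] [FaithfulSMul A K]
    (f : K →+* L) (hξ : ∀ c₀ c₁ c₂ : K, f c₀ + f c₁ * ξ + f c₂ * ξ ^ 2 = 0 →
      c₀ = 0 ∧ c₁ = 0 ∧ c₂ = 0) {a : A} (ha : a ≠ 0) (b : A) :
    f (algebraMap A K a) * ξ ≠ f (algebraMap A K b) := by
  intro h
  have hdep : f (-algebraMap A K b) + f (algebraMap A K a) * ξ + f 0 * ξ ^ 2 = 0 := by
    rw [map_neg, map_zero, h]; ring
  exact ha (FaithfulSMul.algebraMap_injective A K ((hξ _ _ _ hdep).2.1.trans (map_zero _).symm))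

end MinimalPoints

open MinimalPoints in
theorem minimal_points_sequence_general
    {A : Type*} [CommRing A] [IsDomain A] [UniqueFactorizationMonoid A]
    {K : Type*} [Field K] [Algebra A K] [IsFractionRing A K]
    {L : Type*} [Field L]
    (f : K →+* L)
    (abv : AbsoluteValue L ℝ)
    (habv_A : ∀ a : A, a ≠ 0 → 1 ≤ abv (f (algebraMap A K a)))
    (ξ : L)
    (hξ : ∀ c₀ c₁ c₂ : K, f c₀ + f c₁ * ξ + f c₂ * ξ ^ 2 = 0 →
      c₀ = 0 ∧ c₁ = 0 ∧ c₂ = 0)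
    (c₁ X₀ : ℝ) (hc₁ : 0 < c₁) (hc₁' : c₁ < (6 : ℝ) ^ (-1 / 2 : ℝ)) (hX₀ : 1 ≤ X₀)
    (hsol : ∀ X : ℝ, X₀ ≤ X → ∃ x : Fin 3 → A,
      (∀ d : A, d ∣ x 0 → d ∣ x 1 → d ∣ x 2 → IsUnit d) ∧
      abv (f (algebraMap A K (x 0))) ≤ X ∧
      max (abv (f (algebraMap A K (x 0)) * ξ - f (algebraMap A K (x 1))))
          (abv (f (algebraMap A K (x 0)) * ξ ^ 2 - f (algebraMap A K (x 2))))
        ≤ c₁ * X ^ (-1 / Real.goldenRatio)) :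
    ∃ x : ℕ → Fin 3 → A,
      (∀ i : ℕ, 1 ≤ i → ∀ d : A, d ∣ x i 0 → d ∣ x i 1 → d ∣ x i 2 → IsUnit d) ∧
      (∀ i : ℕ, 1 ≤ i →
        max (abv (f (algebraMap A K (x i 0)) * ξ - f (algebraMap A K (x i 1))))
            (abv (f (algebraMap A K (x i 0)) * ξ ^ 2 - f (algebraMap A K (x i 2))))
          ≤ 2 * c₁ * (abv (f (algebraMap A K (x (i + 1) 0)))) ^ (-1 / Real.goldenRatio) ∧
        max (abv (f (algebraMap A K (x (i + 1) 0)) * ξ - f (algebraMap A K (x (i + 1) 1))))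
            (abv (f (algebraMap A K (x (i + 1) 0)) * ξ ^ 2 - f (algebraMap A K (x (i + 1) 2))))
          ≤ (max (abv (f (algebraMap A K (x i 0)) * ξ - f (algebraMap A K (x i 1))))
              (abv (f (algebraMap A K (x i 0)) * ξ ^ 2 - f (algebraMap A K (x i 2))))) / 2 ∧
        abv (f (algebraMap A K (x i 0))) ≤ abv (f (algebraMap A K (x (i + 1) 0))) ∧
        (∀ c d : K, (c • fun j => algebraMap A K (x i j)) + (d • fun j => algebraMap A K (x (i + 1) j)) = (0 : Fin 3 → K) →
          c = 0 ∧ d = 0)) ∧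
      Tendsto (fun i => abv (f (algebraMap A K (x i 0)))) atTop atTop := by
  set φ := f.comp (algebraMap A K)
  have hφ : ∀ a : A, a ≠ 0 → 1 ≤ abv (φ a) := habv_A
  have he : -1 / Real.goldenRatio < 0 := div_neg_of_neg_of_pos (by norm_num) Real.goldenRatio_pos
  have hc₁_lt_one : c₁ < 1 :=
    hc₁'.trans (Real.rpow_lt_one_of_one_lt_of_neg (by norm_num) (by norm_num))
  have hφξ : ∀ a b : A, a ≠ 0 → φ a * ξ ≠ φ b := fun _ b ha =>
    mul_ne_of_linearIndependent f hξ ha b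
  have hsol' : ∀ X, X₀ ≤ X → ∃ x ∈ admissibleTriples A,
      height φ abv x ≤ X ∧ approxError φ abv ξ x ≤ c₁ * X ^ (-1 / Real.goldenRatio) := by
    intro X hX
    obtain ⟨x, hx, hxX, hxL⟩ := hsol X hX
    have hXe : X ^ (-1 / Real.goldenRatio) ≤ 1 :=
      Real.rpow_le_one_of_one_le_of_nonpos (hX₀.trans hX) he.le
    have hxL1 : approxError φ abv ξ x < 1 := hxL.trans_lt (by nlinarith)
    exact ⟨x, ⟨hx, IsPrimitiveTriple.head_ne_zero hφ hx hxL1⟩, hxX, hxL⟩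
  obtain ⟨x, hx, hstep, htendsto⟩ := exists_seq_halving he hc₁ (by linarith)
    (fun x hx => one_pos.trans_le (hφ _ hx.2)) (exists_pos_le_approxError hφ hφξ) hsol'
  refine ⟨x, fun i _ => (hx i).1, fun i _ => ⟨(hstep i).1, (hstep i).2.1, (hstep i).2.2, ?_⟩,
    htendsto⟩
  have hpos := approxError_pos (abv := abv) hφξ (hx i).2
  exact fun c d => eq_zero_of_smul_add_smul_eq_zero hφ (hx i) (hx (i + 1)).1
    (by linarith [(hstep i).2.1])

/-- **Construction of the sequence of minimal points.** `A` is a UFD with fraction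
field `K`, `L = K̄` is the completion of `K` for a nontrivial absolute value `abv`
with `abv a ≥ 1` for nonzero `a ∈ A`, and `ξ ∈ K̄` is such that `1, ξ, ξ²` are
`K`-linearly independent.  Let `0 < c₁ < 6^(-1/2)`, `X₀ ≥ 1`, and suppose that for
every `X ≥ X₀` there is a primitive triple `x ∈ A³` with `|x₀| ≤ X` and
`L(x) ≤ c₁ X^(-1/γ)`.  Then there is a sequence `(x_i)_{i ≥ 1}` of primitive triples
in `A³` such that, with `X_i = |x_{i,0}|` and `L_i = L(x_i)`, for every `i ≥ 1`:
`L_i ≤ 2c₁ X_{i+1}^(-1/γ)`, `L_{i+1} ≤ L_i / 2`, `X_i ≤ X_{i+1}`, the points `x_i` and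
`x_{i+1}` are linearly independent over `K`, and `X_i → ∞`. -/
theorem minimal_points_sequence
    {A : Type*} [CommRing A] [IsDomain A] [UniqueFactorizationMonoid A]
    {K : Type*} [Field K] [Algebra A K] [IsFractionRing A K]
    {L : Type*} [Field L] [MetricSpace L] [CompleteSpace L]
    (f : K →+* L) (hdense : DenseRange f)
    (abv : AbsoluteValue L ℝ)
    (hdist : ∀ x y : L, dist x y = abv (x - y))
    (habv_nontrivial : ∃ x : K, abv (f x) ≠ 0 ∧ abv (f x) ≠ 1)
    (habv_A : ∀ a : A, a ≠ 0 → 1 ≤ abv (f (algebraMap A K a)))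
    (ξ : L)
    (hξ : ∀ c₀ c₁ c₂ : K, f c₀ + f c₁ * ξ + f c₂ * ξ ^ 2 = 0 →
      c₀ = 0 ∧ c₁ = 0 ∧ c₂ = 0)
    (c₁ X₀ : ℝ) (hc₁ : 0 < c₁) (hc₁' : c₁ < (6 : ℝ) ^ (-1 / 2 : ℝ)) (hX₀ : 1 ≤ X₀)
    (hsol : ∀ X : ℝ, X₀ ≤ X → ∃ x : Fin 3 → A,
      (∀ d : A, d ∣ x 0 → d ∣ x 1 → d ∣ x 2 → IsUnit d) ∧
      abv (f (algebraMap A K (x 0))) ≤ X ∧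
      max (abv (f (algebraMap A K (x 0)) * ξ - f (algebraMap A K (x 1))))
          (abv (f (algebraMap A K (x 0)) * ξ ^ 2 - f (algebraMap A K (x 2))))
        ≤ c₁ * X ^ (-1 / Real.goldenRatio)) :
    ∃ x : ℕ → Fin 3 → A,
      (∀ i : ℕ, 1 ≤ i → ∀ d : A, d ∣ x i 0 → d ∣ x i 1 → d ∣ x i 2 → IsUnit d) ∧
      (∀ i : ℕ, 1 ≤ i →
        max (abv (f (algebraMap A K (x i 0)) * ξ - f (algebraMap A K (x i 1))))
            (abv (f (algebraMap A K (x i 0)) * ξ ^ 2 - f (algebraMap A K (x i 2))))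
          ≤ 2 * c₁ * (abv (f (algebraMap A K (x (i + 1) 0)))) ^ (-1 / Real.goldenRatio) ∧
        max (abv (f (algebraMap A K (x (i + 1) 0)) * ξ - f (algebraMap A K (x (i + 1) 1))))
            (abv (f (algebraMap A K (x (i + 1) 0)) * ξ ^ 2 - f (algebraMap A K (x (i + 1) 2))))
          ≤ (max (abv (f (algebraMap A K (x i 0)) * ξ - f (algebraMap A K (x i 1))))
              (abv (f (algebraMap A K (x i 0)) * ξ ^ 2 - f (algebraMap A K (x i 2))))) / 2 ∧
        abv (f (algebraMap A K (x i 0))) ≤ abv (f (algebraMap A K (x (i + 1) 0))) ∧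
        (∀ c d : K, (c • fun j => algebraMap A K (x i j)) + (d • fun j => algebraMap A K (x (i + 1) j)) = (0 : Fin 3 → K) →
          c = 0 ∧ d = 0)) ∧
      Tendsto (fun i => abv (f (algebraMap A K (x i 0)))) atTop atTop :=
  minimal_points_sequence_general f abv habv_A ξ hξ c₁ X₀ hc₁ hc₁' hX₀ hsol
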